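/- Let 0 < a < b and let p ∈ [1, ∞) be a real number. There exists a constant C > 0, depending only on a, b and p, such that for every vector field u : ℝ² → ℝ² that is continuously differentiable on a neighborhood of the closed annulus {x : a ≤ |x| ≤ b} and satisfies u(x)·x = 0 whenever |x| ∈ {a, b}, one has C ∫_Ω |u(x)|^p dx ≤ ∫_Ω ‖Du(x)‖^p dx + ∮_{∂B(0,b)} |u|^p ds, where ‖Du(x)‖ denotes the Frobenius norm of the Jacobian matrix of u at x. -/

import Mathlib

open Real MeasureTheory

noncomputable section

/-- Partial derivative `∂₁ f` of a scalar function on `ℝ²`. -/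
def pd1 (f : ℝ × ℝ → ℝ) : ℝ × ℝ → ℝ := fun x => fderiv ℝ f x (1, 0)

/-- Partial derivative `∂₂ f` of a scalar function on `ℝ²`. -/
def pd2 (f : ℝ × ℝ → ℝ) : ℝ × ℝ → ℝ := fun x => fderiv ℝ f x (0, 1)

/-- First component of a vector field on `ℝ²`. -/
def cmp1 (v : ℝ × ℝ → ℝ × ℝ) : ℝ × ℝ → ℝ := fun x => (v x).1

/-- Second component of a vector field on `ℝ²`. -/
def cmp2 (v : ℝ × ℝ → ℝ × ℝ) : ℝ × ℝ → ℝ := fun x => (v x).2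

/-- The open annulus `Ω = {x ∈ ℝ² : a < |x| < b}`. -/
def ann (a b : ℝ) : Set (ℝ × ℝ) := {x | a ^ 2 < x.1 ^ 2 + x.2 ^ 2 ∧ x.1 ^ 2 + x.2 ^ 2 < b ^ 2}

/-- The closed annulus `{x ∈ ℝ² : a ≤ |x| ≤ b}`. -/
def cann (a b : ℝ) : Set (ℝ × ℝ) := {x | a ^ 2 ≤ x.1 ^ 2 + x.2 ^ 2 ∧ x.1 ^ 2 + x.2 ^ 2 ≤ b ^ 2}

/-- The circle `∂B(0, r) = {x ∈ ℝ² : |x| = r}`. -/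
def circ (r : ℝ) : Set (ℝ × ℝ) := {x | x.1 ^ 2 + x.2 ^ 2 = r ^ 2}

/-- Boundary integral `∮_{∂B(0,r)} f ds = ∫₀^{2π} f(r cos θ, r sin θ) r dθ`. -/
def bInt (r : ℝ) (f : ℝ × ℝ → ℝ) : ℝ :=
  ∫ θ in (0 : ℝ)..(2 * π), f (r * Real.cos θ, r * Real.sin θ) * r

/-- Tangential component `v_τ(x) = v(x)·(x₂, −x₁)/r` on the circle of radius `r`. -/
def tang (r : ℝ) (v : ℝ × ℝ → ℝ × ℝ) : ℝ × ℝ → ℝ :=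
  fun x => ((v x).1 * x.2 - (v x).2 * x.1) / r

/-- The Navier-slip condition on the inner circle `|x| = a`:
`μ Σ_{i,j} τ_i(x) n_j(x) (∂_i v_j(x) + ∂_j v_i(x)) = α v(x)·τ(x)` for all `|x| = a`,
where `n(x) = −x/a` and `τ(x) = (x₂, −x₁)/a`. -/
def navierSlip (μ α a : ℝ) (v : ℝ × ℝ → ℝ × ℝ) : Prop :=
  ∀ x : ℝ × ℝ, x.1 ^ 2 + x.2 ^ 2 = a ^ 2 →
    μ * ((x.2 / a) * (-(x.1 / a)) * (pd1 (cmp1 v) x + pd1 (cmp1 v) x)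
       + (x.2 / a) * (-(x.2 / a)) * (pd1 (cmp2 v) x + pd2 (cmp1 v) x)
       + (-(x.1 / a)) * (-(x.1 / a)) * (pd2 (cmp1 v) x + pd1 (cmp2 v) x)
       + (-(x.1 / a)) * (-(x.2 / a)) * (pd2 (cmp2 v) x + pd2 (cmp2 v) x))
    = α * ((v x).1 * (x.2 / a) + (v x).2 * (-(x.1 / a)))

/-! Along the ray `s ↦ (s cos θ, s sin θ)`, the fundamental theorem of calculus gives
`|u(r, θ)| ≤ |u(b, θ)| + ∫ₐᵇ ‖Du(s, θ)‖ ds`. Raising this to the power `p` (convexity of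
`t ↦ tᵖ` for the sum and Jensen's inequality for the integral), multiplying by the polar weight
`r ≤ b`, bounding `1 ≤ s / a` inside the gradient term and integrating over `a < r < b`,
`-π < θ < π` bounds `∫_Ω |u|ᵖ` by a multiple of `∫_Ω ‖Du‖ᵖ + ∮_{∂B(0,b)} |u|ᵖ`. -/

open Set

lemma mul_cos_sq_add_mul_sin_sq (r θ : ℝ) : (r * cos θ) ^ 2 + (r * sin θ) ^ 2 = r ^ 2 := by
  rw [mul_pow, mul_pow, ← mul_add, cos_sq_add_sin_sq, mul_one]

lemma isOpen_ann (a b : ℝ) : IsOpen (ann a b) := by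
  have hq : Continuous fun x : ℝ × ℝ => x.1 ^ 2 + x.2 ^ 2 := by fun_prop
  exact (isOpen_lt continuous_const hq).inter (isOpen_lt hq continuous_const)

lemma measurableSet_ann (a b : ℝ) : MeasurableSet (ann a b) := (isOpen_ann a b).measurableSet

lemma ann_subset_cann (a b : ℝ) : ann a b ⊆ cann a b := fun _ hx => ⟨hx.1.le, hx.2.le⟩

lemma polarCoord_symm_mem_cann {a b r : ℝ} (ha : 0 ≤ a) (hr : r ∈ Icc a b) (θ : ℝ) :
    polarCoord.symm (r, θ) ∈ cann a b := by
  simp only [cann, polarCoord_symm_apply, mem_ofPred_eq, mul_cos_sq_add_mul_sin_sq]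
  exact ⟨pow_le_pow_left₀ ha hr.1 2, pow_le_pow_left₀ (ha.trans hr.1) hr.2 2⟩

lemma ContinuousOn.comp_polarCoord_symm {a b : ℝ} {h : ℝ × ℝ → ℝ}
    (hh : ContinuousOn h (cann a b)) (ha : 0 ≤ a) :
    ContinuousOn (fun q => h (polarCoord.symm q)) (Icc a b ×ˢ univ) :=
  hh.comp continuous_polarCoord_symm.continuousOn fun q hq => by
    simpa using polarCoord_symm_mem_cann ha hq.1 q.2

lemma polarCoord_target_inter_preimage_ann {a b : ℝ} (ha : 0 ≤ a) (hb : 0 ≤ b) :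
    polarCoord.target ∩ polarCoord.symm ⁻¹' ann a b = Ioo a b ×ˢ Ioo (-π) π := by
  ext ⟨r, θ⟩
  simp only [polarCoord_target, ann, mem_inter_iff, mem_prod, mem_preimage, mem_ofPred_eq,
    polarCoord_symm_apply, mul_cos_sq_add_mul_sin_sq, mem_Ioi, mem_Ioo]
  constructor
  · rintro ⟨⟨hr, hθ⟩, ha2, hb2⟩
    exact ⟨⟨by nlinarith, by nlinarith⟩, hθ⟩
  · rintro ⟨⟨har, hrb⟩, hθ⟩
    exact ⟨⟨by linarith, hθ⟩, by nlinarith, by nlinarith⟩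

lemma intervalIntegrable_intervalIntegral_of_continuousOn {k : ℝ × ℝ → ℝ} {a b c d : ℝ}
    (hab : a ≤ b) (hcd : c ≤ d) (hk : ContinuousOn k (Icc a b ×ˢ Icc c d)) :
    IntervalIntegrable (fun y => ∫ x in a..b, k (x, y)) volume c d := by
  have hint : Integrable k ((volume.restrict (Ioc a b)).prod (volume.restrict (Ioc c d))) := by
    rw [Measure.prod_restrict, ← Measure.volume_eq_prod]
    exact (hk.integrableOn_compact (isCompact_Icc.prod isCompact_Icc)).mono_set
      (prod_mono Ioc_subset_Icc_self Ioc_subset_Icc_self)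
  rw [intervalIntegrable_iff_integrableOn_Ioc_of_le hcd]
  simp_rw [intervalIntegral.integral_of_le hab]
  exact hint.integral_prod_right

lemma setIntegral_ann_eq_polar {a b : ℝ} (ha : 0 ≤ a) (hab : a ≤ b) {h : ℝ × ℝ → ℝ}
    (hh : ContinuousOn h (cann a b)) :
    ∫ x in ann a b, h x = ∫ θ in -π..π, ∫ r in a..b, r * h (polarCoord.symm (r, θ)) := by
  have hpi : -π ≤ π := by linarith [pi_pos]
  have hk : ContinuousOn (fun q : ℝ × ℝ => q.1 * h (polarCoord.symm q))
      (Icc a b ×ˢ Icc (-π) π) :=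
    (continuous_fst.continuousOn.mul (hh.comp_polarCoord_symm ha)).mono
      (prod_mono subset_rfl (subset_univ _))
  have hint := hk.integrableOn_compact (μ := volume) (isCompact_Icc.prod isCompact_Icc)
  calc ∫ x in ann a b, h x = ∫ x, (ann a b).indicator h x :=
        (integral_indicator (measurableSet_ann a b)).symm
    _ = ∫ q in polarCoord.target, q.1 • (ann a b).indicator h (polarCoord.symm q) :=
        (integral_comp_polarCoord_symm _).symm
    _ = ∫ q in polarCoord.target, (polarCoord.symm ⁻¹' ann a b).indicator
          (fun q => q.1 * h (polarCoord.symm q)) q := by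
        congr 1 with q
        by_cases hq : q ∈ polarCoord.symm ⁻¹' ann a b
        · rw [indicator_of_mem hq, indicator_of_mem (mem_preimage.mp hq), smul_eq_mul]
        · rw [indicator_of_notMem hq, indicator_of_notMem (hq ∘ mem_preimage.mpr), smul_zero]
    _ = ∫ q in Ioo a b ×ˢ Ioo (-π) π, q.1 * h (polarCoord.symm q) := by
        rw [setIntegral_indicator
            ((measurableSet_ann a b).preimage continuous_polarCoord_symm.measurable),
          polarCoord_target_inter_preimage_ann ha (ha.trans hab)]
    _ = ∫ r in a..b, ∫ θ in -π..π, r * h (polarCoord.symm (r, θ)) := by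
        rw [Measure.volume_eq_prod, setIntegral_prod _
          (hint.mono_set (prod_mono Ioo_subset_Icc_self Ioo_subset_Icc_self)),
          intervalIntegral.integral_of_le hab, integral_Ioc_eq_integral_Ioo]
        refine setIntegral_congr_fun measurableSet_Ioo fun r _ => ?_
        rw [intervalIntegral.integral_of_le hpi, integral_Ioc_eq_integral_Ioo]
    _ = _ := intervalIntegral_intervalIntegral_swap <| hint.mono_set <| by
        rw [uIoc_of_le hab, uIoc_of_le hpi]
        exact prod_mono Ioc_subset_Icc_self Ioc_subset_Icc_self


lemma bInt_eq_polar (r : ℝ) (h : ℝ × ℝ → ℝ) :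
    bInt r h = ∫ θ in -π..π, r * h (polarCoord.symm (r, θ)) := by
  have hper : Function.Periodic (fun θ => r * h (polarCoord.symm (r, θ))) (2 * π) := fun θ => by
    simp only [polarCoord_symm_apply, cos_add_two_pi, sin_add_two_pi]
  have := hper.intervalIntegral_add_eq 0 (-π)
  rw [zero_add, show -π + 2 * π = π by ring] at this
  rw [bInt, ← this]
  exact intervalIntegral.integral_congr fun θ _ => mul_comm _ _

lemma Real.rpow_add_le_mul_rpow_add_rpow {x y p : ℝ} (hx : 0 ≤ x) (hy : 0 ≤ y) (hp : 1 ≤ p) :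
    (x + y) ^ p ≤ 2 ^ (p - 1) * (x ^ p + y ^ p) := by
  lift x to NNReal using hx
  lift y to NNReal using hy
  exact_mod_cast NNReal.rpow_add_le_mul_rpow_add_rpow x y hp

lemma rpow_intervalIntegral_le {F : ℝ → ℝ} {a b p : ℝ} (hab : a < b) (hp : 1 ≤ p)
    (hF : ContinuousOn F (Icc a b)) (hF0 : ∀ s ∈ Icc a b, 0 ≤ F s) :
    (∫ s in a..b, F s) ^ p ≤ (b - a) ^ (p - 1) * ∫ s in a..b, F s ^ p := by
  have hba : 0 < b - a := sub_pos.2 hab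
  have hvol : volume.real (Ioc a b) = b - a := by simp [hab.le]
  have hFp : ContinuousOn (fun s => F s ^ p) (Icc a b) :=
    hF.rpow_const fun _ _ => Or.inr (by linarith)
  have jensen := (convexOn_rpow hp).map_set_average_le (μ := volume)
    (continuousOn_id.rpow_const fun _ _ => Or.inr (by linarith)) isClosed_Ici
    (by simpa using hab) (by simp)
    ((ae_restrict_iff' measurableSet_Ioc).2 (Filter.Eventually.of_forall
      fun s hs => hF0 s (Ioc_subset_Icc_self hs)))
    ((hF.integrableOn_Icc).mono_set Ioc_subset_Icc_self)
    ((hFp.integrableOn_Icc).mono_set Ioc_subset_Icc_self)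
  simp only [setAverage_eq, hvol, smul_eq_mul] at jensen
  rw [mul_rpow (inv_nonneg.2 hba.le) (setIntegral_nonneg measurableSet_Ioc
    fun s hs => hF0 s (Ioc_subset_Icc_self hs)), inv_rpow hba.le,
    inv_mul_le_iff₀ (rpow_pos_of_pos hba p), ← mul_assoc, ← div_eq_mul_inv,
    ← rpow_sub_one hba.ne'] at jensen
  rwa [intervalIntegral.integral_of_le hab.le, intervalIntegral.integral_of_le hab.le]

lemma norm_le_norm_add_intervalIntegral_norm_deriv {E : Type*} [NormedAddCommGroup E]
    [NormedSpace ℝ E] [CompleteSpace E] {f f' : ℝ → E} {a b r : ℝ}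
    (hf : ∀ s ∈ Icc a b, HasDerivAt f (f' s) s) (hf' : ContinuousOn f' (Icc a b))
    (hr : r ∈ Icc a b) :
    ‖f r‖ ≤ ‖f b‖ + ∫ s in a..b, ‖f' s‖ := by
  have hsub : uIcc r b ⊆ Icc a b := by
    rw [uIcc_of_le hr.2]; exact Icc_subset_Icc_left hr.1
  have hftc : ∫ s in r..b, f' s = f b - f r :=
    intervalIntegral.integral_eq_sub_of_hasDerivAt (fun s hs => hf s (hsub hs))
      ((hf'.mono hsub).intervalIntegrable)
  calc ‖f r‖ ≤ ‖f b‖ + ‖f b - f r‖ := by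
        rw [norm_sub_rev]; exact norm_le_norm_add_norm_sub' _ _
    _ ≤ ‖f b‖ + ∫ s in r..b, ‖f' s‖ := by
        rw [← hftc]; gcongr; exact intervalIntegral.norm_integral_le_integral_norm hr.2
    _ ≤ ‖f b‖ + ∫ s in a..b, ‖f' s‖ := by
        gcongr
        exact intervalIntegral.integral_mono_interval hr.1 hr.2 le_rfl
          (Filter.Eventually.of_forall fun _ => norm_nonneg _)
          (hf'.norm.intervalIntegrable_of_Icc (hr.1.trans hr.2))

def poincareConst (a b p : ℝ) : ℝ :=
  ((b - a) * 2 ^ (p - 1) * (1 + b / a * (b - a) ^ (p - 1)))⁻¹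

lemma poincareConst_pos {a b p : ℝ} (ha : 0 < a) (hab : a < b) : 0 < poincareConst a b p := by
  have := sub_pos.2 hab
  have := ha.trans hab
  unfold poincareConst
  positivity

def OuterRayBound (a b : ℝ) (f g : ℝ × ℝ → ℝ) : Prop :=
  ∀ θ, ∀ r ∈ Icc a b, f (polarCoord.symm (r, θ)) ≤
    f (polarCoord.symm (b, θ)) + ∫ s in a..b, g (polarCoord.symm (s, θ))

section OuterRayBound

variable {a b p : ℝ} {f g : ℝ × ℝ → ℝ}

lemma rpow_polar_le_of_ray_bound (ha : 0 < a) (hab : a < b) (hp : 1 ≤ p)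
    (hg : ContinuousOn g (cann a b)) (hf0 : 0 ≤ f) (hg0 : 0 ≤ g) (hray : OuterRayBound a b f g)
    (θ : ℝ) {r : ℝ} (hr : r ∈ Icc a b) :
    r * f (polarCoord.symm (r, θ)) ^ p ≤ 2 ^ (p - 1) * (b * f (polarCoord.symm (b, θ)) ^ p +
      b / a * (b - a) ^ (p - 1) * ∫ s in a..b, s * g (polarCoord.symm (s, θ)) ^ p) := by
  have hp0 : 0 ≤ p := by linarith
  have hb0 : 0 ≤ b := by linarith
  have hfr0 : 0 ≤ f (polarCoord.symm (r, θ)) := hf0 _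
  have hgθ : ContinuousOn (fun s => g (polarCoord.symm (s, θ))) (Icc a b) :=
    hg.comp (by fun_prop) fun s hs => polarCoord_symm_mem_cann ha.le hs θ
  have hgpθ := hgθ.rpow_const (p := p) fun _ _ => Or.inr hp0
  have hG0 : 0 ≤ ∫ s in a..b, g (polarCoord.symm (s, θ)) :=
    intervalIntegral.integral_nonneg hab.le fun s _ => hg0 _
  have hweight : ∫ s in a..b, g (polarCoord.symm (s, θ)) ^ p ≤
      (∫ s in a..b, s * g (polarCoord.symm (s, θ)) ^ p) / a := by
    rw [le_div_iff₀ ha, ← intervalIntegral.integral_mul_const]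
    refine intervalIntegral.integral_mono_on hab.le
      ((hgpθ.mul continuousOn_const).intervalIntegrable_of_Icc hab.le)
      ((continuousOn_id.mul hgpθ).intervalIntegrable_of_Icc hab.le) fun s hs => ?_
    rw [mul_comm]
    exact mul_le_mul_of_nonneg_right hs.1 (rpow_nonneg (hg0 _) p)
  calc r * f (polarCoord.symm (r, θ)) ^ p
      ≤ b * (f (polarCoord.symm (b, θ)) + ∫ s in a..b, g (polarCoord.symm (s, θ))) ^ p := by
        gcongr
        · exact hr.2
        · exact hray θ r hr
    _ ≤ b * (2 ^ (p - 1) * (f (polarCoord.symm (b, θ)) ^ p +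
          (∫ s in a..b, g (polarCoord.symm (s, θ))) ^ p)) := by
        gcongr
        exact Real.rpow_add_le_mul_rpow_add_rpow (hf0 _) hG0 hp
    _ ≤ b * (2 ^ (p - 1) * (f (polarCoord.symm (b, θ)) ^ p +
          (b - a) ^ (p - 1) * ((∫ s in a..b, s * g (polarCoord.symm (s, θ)) ^ p) / a))) := by
        have := rpow_intervalIntegral_le hab hp hgθ fun s _ => hg0 _
        gcongr
        exact this.trans (by gcongr)
    _ = _ := by ring

lemma integral_ann_rpow_le_of_ray_bound (ha : 0 < a) (hab : a < b) (hp : 1 ≤ p)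
    (hf : ContinuousOn f (cann a b)) (hg : ContinuousOn g (cann a b)) (hf0 : 0 ≤ f) (hg0 : 0 ≤ g)
    (hray : OuterRayBound a b f g) :
    ∫ x in ann a b, f x ^ p ≤ (b - a) * 2 ^ (p - 1) *
      (bInt b (fun x => f x ^ p) + b / a * (b - a) ^ (p - 1) * ∫ x in ann a b, g x ^ p) := by
  have hp0 : 0 ≤ p := by linarith
  have hpi : -π ≤ π := by linarith [pi_pos]
  have hfp : ContinuousOn (fun x => f x ^ p) (cann a b) := hf.rpow_const fun _ _ => Or.inr hp0
  have hgp : ContinuousOn (fun x => g x ^ p) (cann a b) := hg.rpow_const fun _ _ => Or.inr hp0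
  have hpolar {h : ℝ × ℝ → ℝ} (hh : ContinuousOn h (cann a b)) :
      IntervalIntegrable (fun θ => ∫ r in a..b, r * h (polarCoord.symm (r, θ))) volume (-π) π :=
    intervalIntegrable_intervalIntegral_of_continuousOn hab.le hpi <|
      (continuous_fst.continuousOn.mul (hh.comp_polarCoord_symm ha.le)).mono
        (prod_mono subset_rfl (subset_univ _))
  have hcircle : IntervalIntegrable (fun θ => b * f (polarCoord.symm (b, θ)) ^ p) volume (-π) π :=
    (continuous_const.mul (hfp.comp_continuous (by fun_prop)
      fun θ => polarCoord_symm_mem_cann ha.le ⟨hab.le, le_rfl⟩ θ)).intervalIntegrable _ _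
  rw [setIntegral_ann_eq_polar ha.le hab.le hfp, setIntegral_ann_eq_polar ha.le hab.le hgp,
    bInt_eq_polar]
  calc ∫ θ in -π..π, ∫ r in a..b, r * f (polarCoord.symm (r, θ)) ^ p
      ≤ ∫ θ in -π..π, ∫ _ in a..b, 2 ^ (p - 1) * (b * f (polarCoord.symm (b, θ)) ^ p +
          b / a * (b - a) ^ (p - 1) * ∫ s in a..b, s * g (polarCoord.symm (s, θ)) ^ p) := by
        refine intervalIntegral.integral_mono_on hpi (hpolar hfp) ?_ fun θ _ => ?_
        · simp only [intervalIntegral.integral_const, smul_eq_mul]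
          exact ((hcircle.add ((hpolar hgp).const_mul _)).const_mul _).const_mul _
        · exact intervalIntegral.integral_mono_on hab.le
            ((continuousOn_id.mul (hfp.comp (by fun_prop)
              fun r hr => polarCoord_symm_mem_cann ha.le hr θ)).intervalIntegrable_of_Icc hab.le)
            intervalIntegrable_const
            fun r hr => rpow_polar_le_of_ray_bound ha hab hp hg hf0 hg0 hray θ hr
    _ = _ := by
        simp only [intervalIntegral.integral_const, smul_eq_mul,
          intervalIntegral.integral_const_mul,
          intervalIntegral.integral_add hcircle ((hpolar hgp).const_mul _)]
        ring

lemma poincareConst_mul_integral_ann_rpow_le (ha : 0 < a) (hab : a < b) (hp : 1 ≤ p)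
    (hf : ContinuousOn f (cann a b)) (hg : ContinuousOn g (cann a b)) (hf0 : 0 ≤ f) (hg0 : 0 ≤ g)
    (hray : OuterRayBound a b f g) :
    poincareConst a b p * ∫ x in ann a b, f x ^ p ≤
      (∫ x in ann a b, g x ^ p) + bInt b (fun x => f x ^ p) := by
  have hba := sub_pos.2 hab
  have hb := ha.trans hab
  have hcoef : 0 ≤ b / a * (b - a) ^ (p - 1) := by positivity
  have hgrad : 0 ≤ ∫ x in ann a b, g x ^ p :=
    setIntegral_nonneg (measurableSet_ann a b) fun x _ => rpow_nonneg (hg0 x) p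
  have hbdry : 0 ≤ bInt b (fun x => f x ^ p) := by
    rw [bInt_eq_polar]
    exact intervalIntegral.integral_nonneg (by linarith [pi_pos])
      fun θ _ => mul_nonneg (by linarith) (rpow_nonneg (hf0 _) p)
  rw [poincareConst, inv_mul_le_iff₀ (by positivity)]
  refine (integral_ann_rpow_le_of_ray_bound ha hab hp hf hg hf0 hg0 hray).trans ?_
  rw [mul_assoc _ (1 + _)]
  gcongr
  nlinarith

end OuterRayBound

def frobNorm (L : ℝ × ℝ →L[ℝ] ℝ × ℝ) : ℝ :=
  √((L (1, 0)).1 ^ 2 + (L (1, 0)).2 ^ 2 + (L (0, 1)).1 ^ 2 + (L (0, 1)).2 ^ 2)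

lemma continuous_frobNorm : Continuous frobNorm := by
  unfold frobNorm
  fun_prop

lemma frobNorm_fderiv {u : ℝ × ℝ → ℝ × ℝ} {x : ℝ × ℝ} (hu : DifferentiableAt ℝ u x) :
    frobNorm (fderiv ℝ u x) = √(pd1 (cmp1 u) x ^ 2 + pd1 (cmp2 u) x ^ 2
      + pd2 (cmp1 u) x ^ 2 + pd2 (cmp2 u) x ^ 2) := by
  have h1 : fderiv ℝ (cmp1 u) x = (ContinuousLinearMap.fst ℝ ℝ ℝ).comp (fderiv ℝ u x) :=
    hu.hasFDerivAt.fst.fderiv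
  have h2 : fderiv ℝ (cmp2 u) x = (ContinuousLinearMap.snd ℝ ℝ ℝ).comp (fderiv ℝ u x) :=
    hu.hasFDerivAt.snd.fderiv
  simp only [frobNorm, pd1, pd2, h1, h2, ContinuousLinearMap.comp_apply,
    ContinuousLinearMap.coe_fst', ContinuousLinearMap.coe_snd']

-- `ℝ × ℝ` carries the sup norm; the Euclidean norm is the one of `WithLp 2 (ℝ × ℝ)`.
lemma norm_toLp_two (v : ℝ × ℝ) : ‖WithLp.toLp 2 v‖ = √(v.1 ^ 2 + v.2 ^ 2) := by
  simp [WithLp.prod_norm_eq_of_L2]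

lemma norm_toLp_apply_cos_sin_le_frobNorm (L : ℝ × ℝ →L[ℝ] ℝ × ℝ) (θ : ℝ) :
    ‖WithLp.toLp 2 (L (cos θ, sin θ))‖ ≤ frobNorm L := by
  have hω : ((cos θ, sin θ) : ℝ × ℝ) = cos θ • (1, 0) + sin θ • (0, 1) := by simp
  rw [norm_toLp_two, hω, map_add, map_smul, map_smul]
  refine sqrt_le_sqrt ?_
  simp only [Prod.fst_add, Prod.snd_add, Prod.smul_fst, Prod.smul_snd, smul_eq_mul]
  -- Cauchy–Schwarz in `ℝ²`, row by row
  nlinarith [sin_sq_add_cos_sq θ, sq_nonneg (sin θ * (L (1, 0)).1 - cos θ * (L (0, 1)).1),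
    sq_nonneg (sin θ * (L (1, 0)).2 - cos θ * (L (0, 1)).2)]

lemma outerRayBound_of_contDiffOn {a b : ℝ} (ha : 0 ≤ a) {u : ℝ × ℝ → ℝ × ℝ}
    {U : Set (ℝ × ℝ)} (hU : IsOpen U) (hcU : cann a b ⊆ U) (hu : ContDiffOn ℝ 1 u U) :
    OuterRayBound a b (fun x => √((u x).1 ^ 2 + (u x).2 ^ 2))
      (fun x => frobNorm (fderiv ℝ u x)) := by
  intro θ r hr
  have hmem : MapsTo (fun s => polarCoord.symm (s, θ)) (Icc a b) U :=
    fun s hs => hcU (polarCoord_symm_mem_cann ha hs θ)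
  have hDu : ContinuousOn (fun s => fderiv ℝ u (polarCoord.symm (s, θ))) (Icc a b) :=
    (hu.continuousOn_fderiv_of_isOpen hU le_rfl).comp (by fun_prop) hmem
  have hray_deriv (s : ℝ) : HasDerivAt (fun s => polarCoord.symm (s, θ)) (cos θ, sin θ) s :=
    (hasDerivAt_mul_const (cos θ)).prodMk (hasDerivAt_mul_const (sin θ))
  have hderiv : ∀ s ∈ Icc a b, HasDerivAt (fun s => WithLp.toLp 2 (u (polarCoord.symm (s, θ))))
      (WithLp.toLp 2 (fderiv ℝ u (polarCoord.symm (s, θ)) (cos θ, sin θ))) s := fun s hs =>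
    (WithLp.prodContinuousLinearEquiv 2 ℝ ℝ ℝ).symm.hasFDerivAt.comp_hasDerivAt s
      (((hu.differentiableOn one_ne_zero).differentiableAt
        (hU.mem_nhds (hmem hs))).hasFDerivAt.comp_hasDerivAt s (hray_deriv s))
  have hderiv_cont : ContinuousOn
      (fun s => WithLp.toLp 2 (fderiv ℝ u (polarCoord.symm (s, θ)) (cos θ, sin θ))) (Icc a b) :=
    (WithLp.prodContinuousLinearEquiv 2 ℝ ℝ ℝ).symm.continuous.comp_continuousOn
      ((ContinuousLinearMap.apply ℝ (ℝ × ℝ) (cos θ, sin θ)).continuous.comp_continuousOn hDu)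
  beta_reduce
  rw [← norm_toLp_two, ← norm_toLp_two]
  refine (norm_le_norm_add_intervalIntegral_norm_deriv hderiv hderiv_cont hr).trans ?_
  gcongr
  exact intervalIntegral.integral_mono_on (hr.1.trans hr.2)
    (hderiv_cont.norm.intervalIntegrable_of_Icc (hr.1.trans hr.2))
    ((continuous_frobNorm.comp_continuousOn hDu).intervalIntegrable_of_Icc (hr.1.trans hr.2))
    fun s _ => norm_toLp_apply_cos_sin_le_frobNorm _ θ

/-- Poincaré-type inequality on the annulus for tangent vector fields, with
the `L^p` norm controlled by the gradient and the outer boundary trace. -/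
theorem poincare_annulus (a b p : ℝ) (ha : 0 < a) (hab : a < b) (hp : 1 ≤ p) :
    ∃ C : ℝ, 0 < C ∧
      ∀ (u : ℝ × ℝ → ℝ × ℝ) (U : Set (ℝ × ℝ)),
        IsOpen U → cann a b ⊆ U → ContDiffOn ℝ 1 u U →
        (∀ x : ℝ × ℝ, (x.1 ^ 2 + x.2 ^ 2 = a ^ 2 ∨ x.1 ^ 2 + x.2 ^ 2 = b ^ 2) →
          (u x).1 * x.1 + (u x).2 * x.2 = 0) →
        C * ∫ x in ann a b, (Real.sqrt ((u x).1 ^ 2 + (u x).2 ^ 2)) ^ p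
          ≤ (∫ x in ann a b,
              (Real.sqrt ((pd1 (cmp1 u) x) ^ 2 + (pd1 (cmp2 u) x) ^ 2
                + (pd2 (cmp1 u) x) ^ 2 + (pd2 (cmp2 u) x) ^ 2)) ^ p)
            + bInt b (fun x => (Real.sqrt ((u x).1 ^ 2 + (u x).2 ^ 2)) ^ p) := by
  refine ⟨poincareConst a b p, poincareConst_pos ha hab, fun u U hU hcU hu _ => ?_⟩
  have hgrad : ∫ x in ann a b, √(pd1 (cmp1 u) x ^ 2 + pd1 (cmp2 u) x ^ 2
      + pd2 (cmp1 u) x ^ 2 + pd2 (cmp2 u) x ^ 2) ^ p =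
      ∫ x in ann a b, frobNorm (fderiv ℝ u x) ^ p :=
    setIntegral_congr_fun (measurableSet_ann a b) fun x hx => by
      rw [frobNorm_fderiv ((hu.differentiableOn one_ne_zero).differentiableAt
        (hU.mem_nhds (hcU (ann_subset_cann a b hx))))]
  rw [hgrad]
  exact poincareConst_mul_integral_ann_rpow_le ha hab hp
    (((hu.continuousOn.fst.pow 2).add (hu.continuousOn.snd.pow 2)).sqrt.mono hcU)
    ((continuous_frobNorm.comp_continuousOn (hu.continuousOn_fderiv_of_isOpen hU le_rfl)).mono hcU)
    (fun _ => sqrt_nonneg _) (fun _ => sqrt_nonneg _)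
    (outerRayBound_of_contDiffOn ha.le hU hcU hu)
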